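/- arXiv:1810.00638 — 2 statements merged into one kernel-verified Lean document; each statement's English description precedes it below -/
import Mathlib

section
/- Let G = N × C be the direct product of two cyclic groups of order 2 with generators c₁ and c₂ respectively, and let M be a free Z₂-module with basis {x, a, b}. Define a G-action by c₁·x = x, c₁·a = b, c₁·b = a, c₂·x = x + a + b, c₂·a = −a, c₂·b = −b. Then the restriction of M to N is a permutation Z₂[N]-module isomorphic to Z₂ ⊕ Z₂[C₂], and M^N is a permutation Z₂[G/N]-module isomorphic to Z₂[G/N], but M is not a permutation Z₂[G]-module. -/
open scoped Pointwise
noncomputable section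

/-- The model permutation `ℤ_p[H]`-module `⊕_{K ≤ H} ∏_{I_K} ℤ_p[H/K]`. -/
abbrev PermMod (p : ℕ) [Fact p.Prime] (H : Type) [Group H] (I : Subgroup H → Type) : Type :=
  ∀ K : Subgroup H, I K → (H ⧸ K) → ℤ_[p]

/-- The permutation action of `H` on the model permutation module. -/
def permSMul {p : ℕ} [Fact p.Prime] {H : Type} [Group H] {I : Subgroup H → Type}
    (g : H) (f : PermMod p H I) : PermMod p H I :=
  fun K i q => f K i (g⁻¹ • q)

/-- A (profinite) `ℤ_p[H]`-module is a permutation module if it is topologically and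
`H`-equivariantly isomorphic to a model permutation module. -/
def IsPermutationModule (p : ℕ) [Fact p.Prime] (H : Type) [Group H]
    (M : Type) [AddCommGroup M] [Module ℤ_[p] M] [TopologicalSpace M]
    [DistribMulAction H M] : Prop :=
  ∃ (I : Subgroup H → Type) (e : M ≃L[ℤ_[p]] PermMod p H I),
    ∀ (g : H) (m : M), e (g • m) = permSMul g (e m)

/-- A free pro-`p` group on the pointed profinite space `(X, x₀)` with basis map `ω`,
characterized by the universal property with respect to finite `p`-groups. -/
def IsFreeProPOn (p : ℕ) (F : Type) [Group F] [TopologicalSpace F]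
    (X : Type) (τ : TopologicalSpace X) (x₀ : X) (ω : X → F) : Prop :=
  @CompactSpace X τ ∧ @T2Space X τ ∧ @TotallyDisconnectedSpace X τ ∧
  @Continuous X F τ _ ω ∧ ω x₀ = 1 ∧
  ∀ (Q : Type) [Group Q] [Fintype Q], IsPGroup p Q →
    ∀ α : X → Q, @Continuous X Q τ ⊥ α → α x₀ = 1 →
    ∃! ψ : F →* Q, @Continuous F Q _ ⊥ ψ ∧ ∀ x, ψ (ω x) = α x

/-- A free pro-`p` group (on some pointed profinite space). -/
def IsFreeProP (p : ℕ) (F : Type) [Group F] [TopologicalSpace F] : Prop :=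
  ∃ (X : Type) (τ : TopologicalSpace X) (x₀ : X) (ω : X → F), IsFreeProPOn p F X τ x₀ ω

/-- A profinite group is pro-`p` iff every element has `p`-power order modulo every
open subgroup. -/
def IsProPGroup (p : ℕ) (G : Type) [Group G] [TopologicalSpace G] : Prop :=
  ∀ U : Subgroup G, IsOpen (U : Set G) → ∀ g : G, ∃ n : ℕ, g ^ p ^ n ∈ U

/-- `G₀` is a free pro-`p` product (coproduct) of `A` and `B` via `ι₁, ι₂`. -/
def IsFreeProPCoprod (p : ℕ) (G₀ : Type) [Group G₀] [TopologicalSpace G₀]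
    (A : Type) [Group A] [TopologicalSpace A] (B : Type) [Group B] [TopologicalSpace B]
    (ι₁ : A →* G₀) (ι₂ : B →* G₀) : Prop :=
  Continuous ι₁ ∧ Continuous ι₂ ∧
  ∀ (Q : Type) [Group Q] [Fintype Q], IsPGroup p Q →
    ∀ (f₁ : A →* Q) (f₂ : B →* Q), @Continuous A Q _ ⊥ f₁ → @Continuous B Q _ ⊥ f₂ →
    ∃! φ : G₀ →* Q, @Continuous G₀ Q _ ⊥ φ ∧ (∀ a, φ (ι₁ a) = f₁ a) ∧ ∀ b, φ (ι₂ b) = f₂ b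

/-- The subgroup `F` of `Gbig` is the free pro-`p` product of the family of its
subgroups `Hfam`. -/
def IsFreeProPProdFamily (p : ℕ) (Gbig : Type) [Group Gbig] [TopologicalSpace Gbig]
    (F : Subgroup Gbig) (J : Type) (Hfam : J → Subgroup Gbig)
    (hle : ∀ j, Hfam j ≤ F) : Prop :=
  ∀ (Q : Type) [Group Q] [Fintype Q], IsPGroup p Q →
    ∀ f : ∀ j, ↥(Hfam j) →* Q,
      (∀ j, @Continuous (Hfam j) Q _ ⊥ (f j)) →
      ∃! φ : ↥F →* Q, @Continuous (↥F) Q _ ⊥ φ ∧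
        ∀ (j) (g : Gbig) (hg : g ∈ Hfam j), φ ⟨g, hle j hg⟩ = f j ⟨g, hg⟩

/-- `Z` is the free profinite `ℤ_p`-module on the space `X` with the subset `S`
collapsed to `0` (e.g. a basepoint), via the basis map `δ`. -/
def IsFreeProfiniteModuleOn (p : ℕ) [Fact p.Prime] (X : Type) [TopologicalSpace X] (S : Set X)
    (Z : Type) [AddCommGroup Z] [Module ℤ_[p] Z] [TopologicalSpace Z]
    (δ : X → Z) : Prop :=
  Continuous δ ∧ (∀ x ∈ S, δ x = 0) ∧
  ∀ (T : Type) [AddCommGroup T] [Module ℤ_[p] T] [Finite T]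
    (f : X → T), @Continuous X T _ ⊥ f → (∀ x ∈ S, f x = 0) →
    ∃! φ : Z →ₗ[ℤ_[p]] T, @Continuous Z T _ ⊥ φ ∧ ∀ x, φ (δ x) = f x

/-- `G` is a special pro-`p` HNN-extension of the base group `H` (embedded via `ι`),
with associated subgroups `A e` and pointed profinite spaces `(X e, basept e)` of
stable letters mapped into `G` by `η e`: quotient of `(∐_e F(X_e,*)) ∐ H` by the
relations `[a, x] = 1` for `a ∈ A e`, `x ∈ X e`, characterized by its universal
property with respect to finite `p`-groups. -/
def IsSpecialHNN (p : ℕ) (G : Type) [Group G] [TopologicalSpace G]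
    (H : Type) [Group H] (ι : H →* G)
    (E : Type) (A : E → Subgroup H)
    (X : E → Type) (τ : ∀ e, TopologicalSpace (X e)) (basept : ∀ e, X e)
    (η : ∀ e, X e → G) : Prop :=
  Finite E ∧
  (∀ e, @CompactSpace (X e) (τ e)) ∧ (∀ e, @T2Space (X e) (τ e)) ∧
  (∀ e, @TotallyDisconnectedSpace (X e) (τ e)) ∧
  (∀ e, @Continuous (X e) G (τ e) _ (η e)) ∧
  (∀ e, η e (basept e) = 1) ∧
  (∀ e, ∀ a ∈ A e, ∀ x, Commute (ι a) (η e x)) ∧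
  ∀ (Q : Type) [Group Q] [Fintype Q], IsPGroup p Q →
    ∀ (f : H →* Q) (α : ∀ e, X e → Q),
      (∀ e, @Continuous (X e) Q (τ e) ⊥ (α e)) → (∀ e, α e (basept e) = 1) →
      (∀ e, ∀ a ∈ A e, ∀ x, Commute (f a) (α e x)) →
      ∃! φ : G →* Q, @Continuous G Q _ ⊥ φ ∧ (∀ h, φ (ι h) = f h) ∧ ∀ e x, φ (η e x) = α e x

/-- A nontrivial element of finite order. -/
def IsNontrivialTorsion {G : Type} [Group G] (g : G) : Prop :=
  g ≠ 1 ∧ ∃ n : ℕ, 0 < n ∧ g ^ n = 1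

/-- The product topology on a semidirect product. -/
instance sdTop {F H : Type} [Group F] [Group H] [TopologicalSpace F] [TopologicalSpace H]
    {φ : H →* MulAut F} : TopologicalSpace (F ⋊[φ] H) :=
  TopologicalSpace.induced (fun g => (g.left, g.right)) inferInstance

/-- The fixed-point `ℤ_p`-submodule `M^N`. -/
def fixedSubmodule (p : ℕ) [Fact p.Prime] {G M : Type} [Group G] [AddCommGroup M]
    [Module ℤ_[p] M] [DistribMulAction G M] [SMulCommClass G ℤ_[p] M]
    (N : Subgroup G) : Submodule ℤ_[p] M where
  carrier := {m | ∀ n ∈ N, n • m = m}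
  add_mem' := by intro a b ha hb n hn; rw [smul_add, ha n hn, hb n hn]
  zero_mem' := by intro n hn; exact smul_zero n
  smul_mem' := by intro c m hm n hn; rw [smul_comm, hm n hn]

/-- The Klein four group `N × C`, with `N = ⟨c₁⟩` and `C = ⟨c₂⟩` of order 2. -/
abbrev G2 : Type := Multiplicative (ZMod 2) × Multiplicative (ZMod 2)

def c1 : G2 := (Multiplicative.ofAdd 1, 1)
def c2 : G2 := (1, Multiplicative.ofAdd 1)

/-- The subgroup `N = ⟨c₁⟩` (the first factor). -/
def Nsub : Subgroup G2 := Subgroup.prod ⊤ ⊥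

/-- The free `ℤ₂`-module with basis `{x, a, b}`. -/
abbrev M2 : Type := Fin 3 → ℤ_[2]

def xv : M2 := Pi.single 0 1
def av : M2 := Pi.single 1 1
def bv : M2 := Pi.single 2 1


/-! ### Auxiliary material for the proof -/

section Aux

def flipSetoid {α : Type} (σ : α → α) (hσ : ∀ x, σ (σ x) = x) : Setoid α where
  r a b := b = a ∨ b = σ a
  iseqv := by
    constructor
    · exact fun a => Or.inl rfl
    · rintro a b (rfl | rfl)
      · exact Or.inl rfl
      · exact Or.inr (hσ a).symm
    · rintro a b c hab (rfl | rfl)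
      · exact hab
      · rcases hab with rfl | rfl
        · exact Or.inr rfl
        · exact Or.inl (hσ a)

lemma exists_antisymmetrize {α : Type} (σ : α → α) (hσ : ∀ x, σ (σ x) = x)
    (f : α → ℤ_[2]) (hf : ∀ q, f (σ q) = - f q) :
    ∃ h : α → ℤ_[2], ∀ q, h q - h (σ q) = f q := by
  classical
  set st := flipSetoid σ hσ with hst
  let rep : α → α := fun q => (Quotient.mk st q).out
  have hrep1 : ∀ q, rep q = q ∨ rep q = σ q := by
    intro q
    have h0 : Quotient.mk st ((Quotient.mk st q).out) = Quotient.mk st q :=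
      Quotient.out_eq _
    have h1 : st.r (rep q) q := Quotient.exact h0
    rcases h1 with h1 | h1
    · exact Or.inl h1.symm
    · have h2 := congrArg σ h1
      rw [hσ] at h2
      exact Or.inr h2.symm
  have hrep2 : ∀ q, rep (σ q) = rep q := by
    intro q
    have : Quotient.mk st q = Quotient.mk st (σ q) := Quotient.sound (Or.inr rfl)
    simp only [rep, this]
  refine ⟨fun q => if rep q = q then f q else 0, fun q => ?_⟩
  show (if rep q = q then f q else 0) - (if rep (σ q) = σ q then f (σ q) else 0) = f q
  by_cases hq : σ q = q
  · have hfq : f q = 0 := by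
      have := hf q
      rw [hq] at this
      have h2 : (2 : ℤ_[2]) * f q = 0 := by linear_combination this
      rcases mul_eq_zero.mp h2 with h | h
      · exact absurd h two_ne_zero
      · exact h
    simp [hq, hfq]
  · rcases hrep1 q with h1 | h1
    · rw [if_pos h1, hrep2 q, if_neg (by rw [h1]; exact fun h => hq h.symm), sub_zero]
    · rw [if_neg (by rw [h1]; exact hq), hrep2 q, if_pos h1, hf, zero_sub, neg_neg]

lemma M2_decomp (m : M2) : m = m 0 • xv + m 1 • av + m 2 • bv := by
  funext i; fin_cases i <;> simp [xv, av, bv]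

lemma g_smul [DistribMulAction G2 M2] [SMulCommClass G2 ℤ_[2] M2] (g : G2) (m : M2) :
    g • m = m 0 • (g • xv) + m 1 • (g • av) + m 2 • (g • bv) := by
  conv_lhs => rw [M2_decomp m]
  rw [smul_add, smul_add, smul_comm g (m 0) xv, smul_comm g (m 1) av, smul_comm g (m 2) bv]

lemma c1_smul [DistribMulAction G2 M2] [SMulCommClass G2 ℤ_[2] M2]
    (h1x : c1 • xv = xv) (h1a : c1 • av = bv) (h1b : c1 • bv = av) (m : M2) :
    c1 • m = ![m 0, m 2, m 1] := by
  rw [g_smul, h1x, h1a, h1b]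
  funext i; fin_cases i <;> simp [xv, av, bv]

lemma c2_smul [DistribMulAction G2 M2] [SMulCommClass G2 ℤ_[2] M2]
    (h2x : c2 • xv = xv + av + bv) (h2a : c2 • av = -av) (h2b : c2 • bv = -bv) (m : M2) :
    c2 • m = ![m 0, m 0 - m 1, m 0 - m 2] := by
  rw [g_smul, h2x, h2a, h2b]
  funext i; fin_cases i <;> simp [xv, av, bv] <;> ring

lemma c1_mem_Nsub : c1 ∈ Nsub :=
  Subgroup.mem_prod.mpr ⟨Subgroup.mem_top _, Subgroup.mem_bot.mpr rfl⟩

lemma mem_Nsub_cases (n : G2) (hn : n ∈ Nsub) : n = 1 ∨ n = c1 := by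
  have h2 : n.2 = 1 := Subgroup.mem_bot.mp (Subgroup.mem_prod.mp hn).2
  exact (by decide : ∀ k : G2, k.2 = 1 → k = 1 ∨ k = c1) n h2

lemma mem_fixed_iff [DistribMulAction G2 M2] [SMulCommClass G2 ℤ_[2] M2]
    (h1x : c1 • xv = xv) (h1a : c1 • av = bv) (h1b : c1 • bv = av) (m : M2) :
    m ∈ fixedSubmodule 2 (M := M2) Nsub ↔ m 1 = m 2 := by
  constructor
  · intro hm
    have := hm c1 c1_mem_Nsub
    rw [c1_smul h1x h1a h1b] at this
    have h1 := congrFun this 1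
    simpa using h1.symm
  · intro h12 n hn
    rcases mem_Nsub_cases n hn with rfl | rfl
    · exact one_smul _ m
    · rw [c1_smul h1x h1a h1b]
      funext i; fin_cases i <;> simp [h12]

/-- The equivalence for Statement (i): `M|_N ≅ ℤ₂ ⊕ ℤ₂[C₂]`. -/
def eqOne : M2 ≃L[ℤ_[2]] (ℤ_[2] × (ZMod 2 → ℤ_[2])) where
  toFun m := (m 0, fun t => if t = 0 then m 1 else m 2)
  invFun p := ![p.1, p.2 0, p.2 1]
  map_add' a b := by
    refine Prod.ext rfl ?_
    funext t; by_cases h : t = 0 <;> simp [h]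
  map_smul' r a := by
    refine Prod.ext rfl ?_
    funext t; by_cases h : t = 0 <;> simp [h]
  left_inv m := by funext i; fin_cases i <;> simp
  right_inv p := by
    refine Prod.ext rfl ?_
    funext t; fin_cases t <;> simp <;> rfl
  continuous_toFun := by
    apply Continuous.prodMk (continuous_apply 0)
    apply continuous_pi
    intro t
    by_cases h : t = 0 <;> simp [h] <;> exact continuous_apply _
  continuous_invFun := by
    apply continuous_pi
    intro i
    fin_cases i
    · exact continuous_fst
    · exact (continuous_apply (0 : ZMod 2)).comp continuous_snd
    · exact (continuous_apply (1 : ZMod 2)).comp continuous_snd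

lemma eqOne_apply (m : M2) :
    eqOne m = (m 0, fun t => if t = 0 then m 1 else m 2) := rfl

/-- The equivalence for Statement (ii): `M^N ≅ ℤ₂[C₂]`. -/
def eqTwo [DistribMulAction G2 M2] [SMulCommClass G2 ℤ_[2] M2]
    (h1x : c1 • xv = xv) (h1a : c1 • av = bv) (h1b : c1 • bv = av) :
    ↥(fixedSubmodule 2 (M := M2) Nsub) ≃L[ℤ_[2]] (ZMod 2 → ℤ_[2]) where
  toFun m := fun t => if t = 0 then m.1 0 - m.1 1 else m.1 1
  invFun f := ⟨![f 0 + f 1, f 1, f 1], by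
    rw [mem_fixed_iff h1x h1a h1b]
    simp⟩
  map_add' a b := by
    funext t; by_cases h : t = 0 <;> simp [h] <;> ring
  map_smul' r a := by
    funext t; by_cases h : t = 0 <;> simp [h] <;> ring
  left_inv m := by
    have h12 : m.1 1 = m.1 2 := (mem_fixed_iff h1x h1a h1b m.1).mp m.2
    apply Subtype.ext
    funext i; fin_cases i <;> simp [h12]
  right_inv f := by
    funext t; fin_cases t <;> simp <;> rfl
  continuous_toFun := by
    apply continuous_pi
    intro t
    by_cases h : t = 0 <;> simp [h]
    · exact ((continuous_apply (0 : Fin 3)).comp continuous_subtype_val).sub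
        ((continuous_apply (1 : Fin 3)).comp continuous_subtype_val)
    · exact (continuous_apply (1 : Fin 3)).comp continuous_subtype_val
  continuous_invFun := by
    apply Continuous.subtype_mk
    apply continuous_pi
    intro i
    fin_cases i
    · exact (continuous_apply (0 : ZMod 2)).add (continuous_apply (1 : ZMod 2))
    · exact continuous_apply (1 : ZMod 2)
    · exact continuous_apply (1 : ZMod 2)

lemma eqTwo_apply [DistribMulAction G2 M2] [SMulCommClass G2 ℤ_[2] M2]
    (h1x : c1 • xv = xv) (h1a : c1 • av = bv) (h1b : c1 • bv = av)
    (m : ↥(fixedSubmodule 2 (M := M2) Nsub)) :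
    eqTwo h1x h1a h1b m = fun t => if t = 0 then m.1 0 - m.1 1 else m.1 1 := rfl

end Aux

/-- the counterexample showing `G`-invariance is essential. -/
theorem example_not_permutation
    [DistribMulAction G2 M2] [SMulCommClass G2 ℤ_[2] M2]
    (h1x : c1 • xv = xv) (h1a : c1 • av = bv) (h1b : c1 • bv = av)
    (h2x : c2 • xv = xv + av + bv) (h2a : c2 • av = -av) (h2b : c2 • bv = -bv) :
    -- the restriction of `M` to `N` is a permutation module `ℤ₂ ⊕ ℤ₂[C₂]`
    (∃ e : M2 ≃L[ℤ_[2]] (ℤ_[2] × (ZMod 2 → ℤ_[2])),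
       ∀ m : M2, e (c1 • m) = ((e m).1, fun t => (e m).2 (t + 1))) ∧
    -- `M^N` is a permutation `ℤ₂[G/N]`-module isomorphic to `ℤ₂[G/N] ≅ ℤ₂[C₂]`
    (∃ e : ↥(fixedSubmodule 2 (M := M2) Nsub) ≃L[ℤ_[2]] (ZMod 2 → ℤ_[2]),
       ∀ m : ↥(fixedSubmodule 2 (M := M2) Nsub),
         e ⟨c2 • m.1, by
              intro n hn
              rw [smul_smul, mul_comm n c2, ← smul_smul, m.2 n hn]⟩
           = fun t => e m (t + 1)) ∧
    -- but `M` is not a permutation `ℤ₂[G]`-module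
    ¬ IsPermutationModule 2 G2 M2 := by
  classical
  refine ⟨?_, ?_, ?_⟩
  · -- Statement (i)
    refine ⟨eqOne, fun m => ?_⟩
    rw [c1_smul h1x h1a h1b m, eqOne_apply, eqOne_apply]
    refine Prod.ext (by simp) ?_
    funext t
    fin_cases t <;>
      simp [show ((0:ZMod 2) + 1) ≠ 0 by decide, show ((1:ZMod 2) + 1) = 0 by decide,
        show (2 : ZMod 2) = 0 by decide] <;> rfl
  · -- Statement (ii)
    refine ⟨eqTwo h1x h1a h1b, fun m => ?_⟩
    rw [eqTwo_apply, eqTwo_apply]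
    have hc := c2_smul h2x h2a h2b m.1
    funext t
    fin_cases t <;>
        simp [hc, show ((0:ZMod 2) + 1) ≠ 0 by decide, show ((1:ZMod 2) + 1) = 0 by decide,
          show (2 : ZMod 2) = 0 by decide] <;>
      split_ifs <;> rename_i ha hb <;> first | rfl | exact (ha rfl).elim | exact absurd ha (by decide : (1 : Fin 2) ≠ 0) | exact absurd hb (by decide)
  · -- Statement (iii)
    rintro ⟨I, e, he⟩
    have hinv : c2⁻¹ = c2 := by decide
    have hc22 : c2 * c2 = 1 := by decide
    have hfneg : permSMul c2 (e av) = -(e av) := by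
      have h := he c2 av
      rw [h2a, map_neg] at h
      exact h.symm
    have hσ : ∀ (K : Subgroup G2) (q : G2 ⧸ K), c2⁻¹ • (c2⁻¹ • q) = q := by
      intro K q
      rw [smul_smul, hinv, hc22, one_smul]
    have hpt : ∀ (K : Subgroup G2) (i : I K) (q : G2 ⧸ K),
        e av K i (c2⁻¹ • q) = -(e av K i q) := by
      intro K i q
      exact congrFun (congrFun (congrFun hfneg K) i) q
    have hex : ∀ (K : Subgroup G2) (i : I K), ∃ h : (G2 ⧸ K) → ℤ_[2],
        ∀ q, h q - h (c2⁻¹ • q) = e av K i q :=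
      fun K i => exists_antisymmetrize (fun q => c2⁻¹ • q) (hσ K) (e av K i) (hpt K i)
    choose hh hhspec using hex
    set m : M2 := e.symm (fun K i q => hh K i q) with hm
    have key : e (m - c2 • m) = e av := by
      rw [map_sub, he c2 m, hm, e.apply_symm_apply]
      funext K i q
      simp only [Pi.sub_apply, permSMul]
      exact hhspec K i q
    have hav : m - c2 • m = av := e.injective key
    have hc2m := c2_smul h2x h2a h2b m
    have heq1 : m 1 - (m 0 - m 1) = 1 := by
      have h := congrFun hav 1
      rw [Pi.sub_apply, hc2m] at h
      simpa [av] using h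
    have heq2 : m 2 - (m 0 - m 2) = 0 := by
      have h := congrFun hav 2
      rw [Pi.sub_apply, hc2m] at h
      simpa [av, bv] using h
    have hmain : (2 : ℤ_[2]) * (m 1 - m 2) = 1 := by linear_combination heq1 - heq2
    have hz := congrArg (PadicInt.toZMod : ℤ_[2] →+* ZMod 2) hmain
    rw [map_mul, map_one, map_ofNat] at hz
    have h20 : (2 : ZMod 2) = 0 := by decide
    rw [h20, zero_mul] at hz
    exact one_ne_zero hz.symm
end
end

section
/- Let G̃ = HNN(K, A_i, X_i) (i in a finite set I) be a special pro-p HNN-extension of a finite p-group K, and let F̃ be the normal closure in G̃ of the free pro-p group F(∪_i X_i, *). Choose coset representative sets R_i for K/N_K(A_i) and S_i for N_K(A_i)/A_i. Then F̃ decomposes as the free pro-p product ∐_{i∈I} ∐_{r∈R_i} ∐_{s∈S_i} F(X_i,*)^{s⁻¹r⁻¹}. -/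
open scoped Pointwise
noncomputable section

section KurThmHelpers

variable {G : Type} [Group G] [TopologicalSpace G]

lemma KurX.isClosed_eqSet {Q : Type} [Monoid Q] (f g : G →* Q)
    (hf : @Continuous G Q _ ⊥ f) (hg : @Continuous G Q _ ⊥ g) :
    IsClosed {x : G | f x = g x} := by
  rw [← isOpen_compl_iff]
  have h : {x : G | f x = g x}ᶜ = ⋃ q : Q, (f ⁻¹' {q}) ∩ (g ⁻¹' ({q}ᶜ)) := by
    ext x
    simp only [Set.mem_compl_iff, Set.mem_setOf_eq, Set.mem_iUnion, Set.mem_inter_iff,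
      Set.mem_preimage, Set.mem_singleton_iff]
    constructor
    · intro hne; exact ⟨f x, rfl, fun h' => hne h'.symm⟩
    · rintro ⟨q, rfl, hne⟩ h'; exact hne h'.symm
  rw [h]
  exact isOpen_iUnion fun q => IsOpen.inter
    (@Continuous.isOpen_preimage G Q _ ⊥ _ hf _ trivial)
    (@Continuous.isOpen_preimage G Q _ ⊥ _ hg _ trivial)

lemma KurX.continuous_bot_of_isOpen_ker [IsTopologicalGroup G] {Q : Type} [Group Q] (f : G →* Q)
    (h : IsOpen (f.ker : Set G)) : @Continuous G Q _ ⊥ f := by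
  refine @continuous_def G Q _ ⊥ _ |>.2 fun s _ => ?_
  have key : f ⁻¹' s = ⋃ g : f ⁻¹' s, (g : G) • (f.ker : Set G) := by
    ext x
    simp only [Set.mem_iUnion, Set.mem_preimage]
    constructor
    · intro hx
      exact ⟨⟨x, hx⟩, Set.mem_smul_set.2 ⟨1, f.map_one, mul_one x⟩⟩
    · rintro ⟨⟨g, hg⟩, hx⟩
      rcases Set.mem_smul_set.1 hx with ⟨k, hk, rfl⟩
      simpa [map_mul, MonoidHom.mem_ker.1 hk] using hg
  rw [key]
  exact isOpen_iUnion fun g => h.smul _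

lemma KurX.isPGroup_of_ker {p : ℕ} {W K : Type} [Group W] [Group K] (ϕ : W →* K)
    (hker : ∀ w : W, ϕ w = 1 → ∃ m : ℕ, w ^ p ^ m = 1) (hK : IsPGroup p K) :
    IsPGroup p W := by
  intro w
  obtain ⟨n, hn⟩ := hK (ϕ w)
  obtain ⟨m, hm⟩ := hker (w ^ p ^ n) (by rw [map_pow, hn])
  exact ⟨n + m, by rw [pow_add, pow_mul, hm]⟩

lemma KurX.isPGroup_pi {p : ℕ} [Fact p.Prime] {K Q : Type} [Group Q] [Finite Q]
    (hQ : IsPGroup p Q) : IsPGroup p (K → Q) := by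
  obtain ⟨n, hn⟩ := IsPGroup.iff_card.1 hQ
  intro c
  refine ⟨n, funext fun k => ?_⟩
  show (c k) ^ p ^ n = 1
  rw [← hn, pow_card_eq_one']

lemma KurX.map_conj_topClosure [IsTopologicalGroup G] (g : G) (H : Subgroup G) :
    Subgroup.map (MulAut.conj g).toMonoidHom H.topologicalClosure =
      (Subgroup.map (MulAut.conj g).toMonoidHom H).topologicalClosure := by
  have hfun : ⇑(MulAut.conj g).toMonoidHom =
      ⇑((Homeomorph.mulLeft g).trans (Homeomorph.mulRight g⁻¹)) := by
    funext x; rfl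
  apply SetLike.coe_injective
  rw [Subgroup.coe_map, Subgroup.topologicalClosure_coe, Subgroup.topologicalClosure_coe,
    Subgroup.coe_map, hfun, Homeomorph.image_closure]

lemma KurX.conj_map_map [IsTopologicalGroup G] (a b : G) (H : Subgroup G) :
    Subgroup.map (MulAut.conj a).toMonoidHom
      (Subgroup.map (MulAut.conj b).toMonoidHom H) =
      Subgroup.map (MulAut.conj (a * b)).toMonoidHom H := by
  rw [Subgroup.map_map]
  congr 1
  ext x
  simp [mul_assoc]

/-- The left-translation action of `K` on `K → Q`. -/
def KurX.transHom (K Q : Type) [Group K] [Group Q] : K →* MulAut (K → Q) :=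
  MonoidHom.mk' (fun k => MulEquiv.arrowCongr (Equiv.mulLeft k) (MulEquiv.refl Q))
    (by
      intro a b
      ext c k'
      simp [MulEquiv.arrowCongr, Equiv.mulLeft, mul_assoc])

@[simp] lemma KurX.transHom_apply {K Q : Type} [Group K] [Group Q] (k : K) (c : K → Q)
    (k' : K) : KurX.transHom K Q k c k' = c (k⁻¹ * k') := rfl

lemma KurX.finite_sdp {N G : Type} [Group N] [Group G] [Finite N] [Finite G]
    (φ : G →* MulAut N) : Finite (N ⋊[φ] G) :=
  Finite.of_injective (fun w => (w.left, w.right))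
    (fun a b h => by
      cases a; cases b
      simp only [Prod.mk.injEq] at h
      simp [h.1, h.2])

lemma KurX.isPGroup_sdp {p : ℕ} [Fact p.Prime] {K Q : Type} [Group K] [Group Q]
    [Finite Q] (hK : IsPGroup p K) (hQ : IsPGroup p Q)
    (φ : K →* MulAut (K → Q)) : IsPGroup p ((K → Q) ⋊[φ] K) := by
  refine KurX.isPGroup_of_ker SemidirectProduct.rightHom (fun w hw => ?_) hK
  have : w ∈ (SemidirectProduct.inl : (K → Q) →* (K → Q) ⋊[φ] K).range := by
    rw [SemidirectProduct.range_inl_eq_ker_rightHom]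
    exact hw
  obtain ⟨c, rfl⟩ := this
  obtain ⟨m, hm⟩ := KurX.isPGroup_pi (K := K) hQ c
  exact ⟨m, by rw [← map_pow, hm, map_one]⟩

lemma KurX.commute_inr_inl {N G : Type} [Group N] [Group G] {φ : G →* MulAut N}
    (g : G) (n : N) (h : φ g n = n) :
    Commute (SemidirectProduct.inr g : N ⋊[φ] G) (SemidirectProduct.inl n) := by
  have h2 : (SemidirectProduct.inl n : N ⋊[φ] G) =
      SemidirectProduct.inr g * SemidirectProduct.inl n * (SemidirectProduct.inr g)⁻¹ := by
    rw [← map_inv, ← SemidirectProduct.inl_aut, h]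
  show SemidirectProduct.inr g * SemidirectProduct.inl n =
    SemidirectProduct.inl n * SemidirectProduct.inr g
  calc SemidirectProduct.inr g * SemidirectProduct.inl n
      = (SemidirectProduct.inr g * SemidirectProduct.inl n * (SemidirectProduct.inr g)⁻¹) *
        SemidirectProduct.inr g := by group
    _ = SemidirectProduct.inl n * SemidirectProduct.inr g := by rw [← h2]

end KurThmHelpers

lemma KurX.eq_top_of_unique_homs {p : ℕ} [Fact p.Prime] {G : Type} [Group G] [TopologicalSpace G]
    [IsTopologicalGroup G] [CompactSpace G] [T2Space G] [TotallyDisconnectedSpace G]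
    (hG : IsProPGroup p G) (D : Subgroup G) (hD : IsClosed (D : Set G))
    (huniq : ∀ (Q : Type) [Group Q] [Fintype Q], IsPGroup p Q →
      ∀ φ₁ φ₂ : G →* Q, @Continuous G Q _ ⊥ φ₁ → @Continuous G Q _ ⊥ φ₂ →
      (∀ d ∈ D, φ₁ d = φ₂ d) → φ₁ = φ₂) : D = ⊤ := by
  by_contra hne
  obtain ⟨g, hg⟩ : ∃ g : G, g ∉ D := by
    by_contra hall
    push_neg at hall
    exact hne ((Subgroup.eq_top_iff' _).2 hall)
  have hC₀ : IsClosed (g⁻¹ • (D : Set G)) := hD.smul g⁻¹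
  have h1W : (1 : G) ∈ (g⁻¹ • (D : Set G))ᶜ := by
    intro h1
    rcases Set.mem_smul_set.1 h1 with ⟨d, hd, hd1⟩
    rw [smul_eq_mul] at hd1
    exact hg ((inv_mul_eq_one.1 hd1).symm ▸ hd)
  obtain ⟨V, hVclopen, h1V, hVW⟩ :=
    compact_exists_isClopen_in_isOpen hC₀.isOpen_compl h1W
  obtain ⟨U, hUV⟩ :=
    IsTopologicalGroup.exist_openNormalSubgroup_sub_clopen_nhds_of_one hVclopen h1V
  have hUD : ∀ u : G, u ∈ U.toSubgroup → g * u ∉ D := by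
    intro u hu hgu
    have : u ∈ g⁻¹ • (D : Set G) := Set.mem_smul_set.2 ⟨g * u, hgu, by rw [smul_eq_mul, inv_mul_cancel_left]⟩
    exact hVW (hUV hu) this
  haveI : Finite (G ⧸ U.toSubgroup) := Subgroup.quotient_finite_of_isOpen _ U.isOpen
  haveI : Fintype (G ⧸ U.toSubgroup) := Fintype.ofFinite _
  have hQp : IsPGroup p (G ⧸ U.toSubgroup) := by
    intro q
    obtain ⟨x, rfl⟩ := QuotientGroup.mk'_surjective U.toSubgroup q
    obtain ⟨n, hn⟩ := hG U.toSubgroup U.isOpen x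
    exact ⟨n, by rw [← map_pow]; exact (QuotientGroup.eq_one_iff _).2 hn⟩
  set Δ : Subgroup (G ⧸ U.toSubgroup) := D.map (QuotientGroup.mk' U.toSubgroup) with hΔdef
  have hΔ : Δ ≠ ⊤ := by
    intro htop
    have : QuotientGroup.mk' U.toSubgroup g ∈ Δ := htop ▸ Subgroup.mem_top _
    rcases this with ⟨d, hd, hdg⟩
    rcases (QuotientGroup.mk'_eq_mk' _).1 hdg with ⟨z, hz, hzeq⟩
    -- d * z = g
    have : g * z⁻¹ ∈ D := by rw [← hzeq]; simpa using hd
    exact hUD z⁻¹ (U.toSubgroup.inv_mem hz) (by simpa using this)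
  obtain ⟨M, hMco, hΔM⟩ :=
    (IsCoatomic.eq_top_or_exists_le_coatom (b := Δ)).resolve_left hΔ
  haveI hMnormal : M.Normal := by
    haveI := hQp.isNilpotent
    exact Subgroup.NormalizerCondition.normal_of_coatom M (normalizerCondition_of_isNilpotent (G := G ⧸ U.toSubgroup)) hMco
  haveI : Finite ((G ⧸ U.toSubgroup) ⧸ M) := Quotient.finite _
  haveI : Fintype ((G ⧸ U.toSubgroup) ⧸ M) := Fintype.ofFinite _
  set φ₁ : G →* (G ⧸ U.toSubgroup) ⧸ M :=
    (QuotientGroup.mk' M).comp (QuotientGroup.mk' U.toSubgroup) with hφ₁def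
  have hker : IsOpen (φ₁.ker : Set G) := by
    apply Subgroup.isOpen_mono (H₁ := U.toSubgroup) _ U.isOpen
    intro u hu
    have h1 : QuotientGroup.mk' U.toSubgroup u = 1 := (QuotientGroup.eq_one_iff _).2 hu
    rw [MonoidHom.mem_ker, hφ₁def, MonoidHom.comp_apply, h1, map_one]
  have heq : φ₁ = (1 : G →* (G ⧸ U.toSubgroup) ⧸ M) := by
    apply huniq _ (hQp.to_quotient M) _ _ (KurX.continuous_bot_of_isOpen_ker _ hker)
      (KurX.continuous_bot_of_isOpen_ker 1 (by simp [MonoidHom.ker_one]))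
    intro d hd
    have : QuotientGroup.mk' U.toSubgroup d ∈ M := hΔM (Subgroup.mem_map_of_mem _ hd)
    simpa [hφ₁def] using (QuotientGroup.eq_one_iff _).2 this
  obtain ⟨q, hq⟩ : ∃ q, q ∉ M := by
    by_contra hall
    push_neg at hall
    exact hMco.1 ((Subgroup.eq_top_iff' _).2 hall)
  obtain ⟨x, rfl⟩ := QuotientGroup.mk'_surjective U.toSubgroup q
  have : φ₁ x = 1 := by rw [heq]; rfl
  rw [hφ₁def] at this
  exact hq ((QuotientGroup.eq_one_iff _).1 this)


def KurX.valAux {K Gt Q : Type} [Group K] [Group Gt] [TopologicalSpace Gt] [IsTopologicalGroup Gt]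
    [Group Q] {I : Type} (ι : K →* Gt) (R S : I → Set K) {X : I → Type} (η : ∀ i, X i → Gt)
    (f : ∀ j : Σ i : I, (↥(R i) × ↥(S i)),
      ↥(Subgroup.map (MulAut.conj (ι (((j.2.2 : K))⁻¹ * ((j.2.1 : K))⁻¹))⁻¹).toMonoidHom
        ((Subgroup.closure (Set.range (η j.1))).topologicalClosure)) →* Q)
    (i : I) (r s : K) (hr : r ∈ R i) (hs : s ∈ S i) (x : X i) : Q :=
  f ⟨i, (⟨r, hr⟩, ⟨s, hs⟩)⟩
    ⟨(MulAut.conj ((ι (s⁻¹ * r⁻¹))⁻¹)).toMonoidHom (η i x),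
      Subgroup.mem_map_of_mem _ (Subgroup.le_topologicalClosure _
        (Subgroup.subset_closure ⟨x, rfl⟩))⟩

lemma KurX.valAux_congr {K Gt Q : Type} [Group K] [Group Gt] [TopologicalSpace Gt]
    [IsTopologicalGroup Gt] [Group Q] {I : Type} (ι : K →* Gt) (R S : I → Set K)
    {X : I → Type} (η : ∀ i, X i → Gt)
    (f : ∀ j : Σ i : I, (↥(R i) × ↥(S i)),
      ↥(Subgroup.map (MulAut.conj (ι (((j.2.2 : K))⁻¹ * ((j.2.1 : K))⁻¹))⁻¹).toMonoidHom
        ((Subgroup.closure (Set.range (η j.1))).topologicalClosure)) →* Q)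
    (i : I) {r₁ s₁ r₂ s₂ : K} (hr₁ : r₁ ∈ R i) (hs₁ : s₁ ∈ S i)
    (hr₂ : r₂ ∈ R i) (hs₂ : s₂ ∈ S i) (hreq : r₁ = r₂) (hseq : s₁ = s₂) (x : X i) :
    KurX.valAux ι R S η f i r₁ s₁ hr₁ hs₁ x = KurX.valAux ι R S η f i r₂ s₂ hr₂ hs₂ x := by
  subst hreq; subst hseq; rfl

/-- Kurosh decomposition of the kernel of a special HNN-extension. -/
theorem kernel_of_special_HNN_decomposition
    (p : ℕ) [Fact p.Prime]
    (Gt : Type) [Group Gt] [TopologicalSpace Gt] [IsTopologicalGroup Gt]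
    [CompactSpace Gt] [T2Space Gt] [TotallyDisconnectedSpace Gt]
    (hGt : IsProPGroup p Gt)
    (K : Type) [Group K] [Finite K] (hK : IsPGroup p K)
    (ι : K →* Gt) (hιinj : Function.Injective ι)
    (I : Type) (A : I → Subgroup K)
    (X : I → Type) (τ : ∀ i, TopologicalSpace (X i)) (basept : ∀ i, X i)
    (η : ∀ i, X i → Gt)
    (hHNN : IsSpecialHNN p Gt K ι I A X τ basept η)
    -- coset representative sets `R i` for `K/N_K(A_i)` and `S i` for `N_K(A_i)/A_i`
    (R S : I → Set K)
    (hR : ∀ i, ∀ k : K, ∃! r, r ∈ R i ∧ r⁻¹ * k ∈ Subgroup.normalizer (A i : Set K))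
    (hS : ∀ i, S i ⊆ ↑(Subgroup.normalizer (A i : Set K)) ∧
       ∀ k ∈ Subgroup.normalizer (A i : Set K), ∃! s, s ∈ S i ∧ s⁻¹ * k ∈ A i) :
    -- conclusion: `F̃ = ∐_{i,r,s} F(X_i,*)^{s⁻¹r⁻¹}`, where `F̃` is the normal
    -- closure of `F(∪_i X_i,*)` in `G̃`
    ∃ hle : (∀ j : Σ i : I, (↥(R i) × ↥(S i)),
        Subgroup.map (MulAut.conj (ι (((j.2.2 : K))⁻¹ * ((j.2.1 : K))⁻¹))⁻¹).toMonoidHom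
            ((Subgroup.closure (Set.range (η j.1))).topologicalClosure)
          ≤ (Subgroup.normalClosure (⋃ i, Set.range (η i))).topologicalClosure),
      IsFreeProPProdFamily p Gt
        ((Subgroup.normalClosure (⋃ i, Set.range (η i))).topologicalClosure)
        (Σ i : I, (↥(R i) × ↥(S i)))
        (fun j => Subgroup.map
          (MulAut.conj (ι (((j.2.2 : K))⁻¹ * ((j.2.1 : K))⁻¹))⁻¹).toMonoidHom
          ((Subgroup.closure (Set.range (η j.1))).topologicalClosure)) hle := by
  classical
  obtain ⟨hIfin, hXc, hXt2, hXtd, hηc, hηb, hcommι, hUP⟩ := hHNN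
  have hR' : ∀ i (k : K), ∃ r, (r ∈ R i ∧ r⁻¹ * k ∈ Subgroup.normalizer (A i : Set K)) ∧
      ∀ y, (y ∈ R i ∧ y⁻¹ * k ∈ Subgroup.normalizer (A i : Set K)) → y = r := hR
  choose rr hrr hrrU using hR'
  have hS' : ∀ i (k : K), ∃ s, (s ∈ S i ∧ s⁻¹ * ((rr i k)⁻¹ * k) ∈ A i) ∧
      ∀ y, (y ∈ S i ∧ y⁻¹ * ((rr i k)⁻¹ * k) ∈ A i) → y = s :=
    fun i k => (hS i).2 _ (hrr i k).2
  choose ss hss hssU using hS'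
  have claim_r : ∀ i (k a : K), a ∈ A i → rr i (k * a) = rr i k := by
    intro i k a ha
    refine hrrU i k (rr i (k * a)) ⟨(hrr i (k * a)).1, ?_⟩
    have h1 : (rr i (k * a))⁻¹ * (k * a) ∈ Subgroup.normalizer (A i : Set K) := (hrr i (k * a)).2
    have h2 := mul_mem h1 (inv_mem (Subgroup.le_normalizer ha))
    simpa [mul_assoc] using h2
  have claim_s : ∀ i (k a : K), a ∈ A i → ss i (k * a) = ss i k := by
    intro i k a ha
    refine hssU i k (ss i (k * a)) ⟨(hss i (k * a)).1, ?_⟩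
    have h1 : (ss i (k * a))⁻¹ * ((rr i (k * a))⁻¹ * (k * a)) ∈ A i := (hss i (k * a)).2
    rw [claim_r i k a ha] at h1
    have h2 := mul_mem h1 (inv_mem ha)
    simpa [mul_assoc] using h2
  have claim_rs_r : ∀ i (r s : K), r ∈ R i → s ∈ S i → rr i (r * s) = r := by
    intro i r s hr hs
    refine (hrrU i (r * s) r ⟨hr, ?_⟩).symm
    rw [inv_mul_cancel_left]
    exact (hS i).1 hs
  have claim_rs_s : ∀ i (r s : K), r ∈ R i → s ∈ S i → ss i (r * s) = s := by
    intro i r s hr hs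
    refine (hssU i (r * s) s ⟨hs, ?_⟩).symm
    rw [claim_rs_r i r s hr hs]
    have h1 : s⁻¹ * (r⁻¹ * (r * s)) = 1 := by group
    rw [h1]
    exact (A i).one_mem
  have hηFT : ∀ i (x : X i), η i x ∈ (Subgroup.closure (Set.range (η i))).topologicalClosure :=
    fun i x => Subgroup.le_topologicalClosure _ (Subgroup.subset_closure ⟨x, rfl⟩)
  haveI hNCn : (Subgroup.normalClosure (⋃ i, Set.range (η i))).Normal :=
    Subgroup.normalClosure_normal
  haveI hFn : ((Subgroup.normalClosure (⋃ i, Set.range (η i))).topologicalClosure).Normal :=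
    Subgroup.is_normal_topologicalClosure _
  have hηF : ∀ i (x : X i),
      η i x ∈ (Subgroup.normalClosure (⋃ i, Set.range (η i))).topologicalClosure :=
    fun i x => Subgroup.le_topologicalClosure _
      (Subgroup.subset_normalClosure (Set.mem_iUnion.2 ⟨i, ⟨x, rfl⟩⟩))
  have hFTleF : ∀ i, (Subgroup.closure (Set.range (η i))).topologicalClosure ≤
      (Subgroup.normalClosure (⋃ i, Set.range (η i))).topologicalClosure := fun i =>
    Subgroup.topologicalClosure_minimal _
      ((Subgroup.closure_le _).2 (by rintro g ⟨x, rfl⟩; exact hηF i x))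
      (Subgroup.isClosed_topologicalClosure _)
  have hψ : ∀ (r s : K), (ι (s⁻¹ * r⁻¹))⁻¹ = ι (r * s) := by
    intro r s
    rw [← map_inv, mul_inv_rev, inv_inv, inv_inv]
  have hconjapply : ∀ (g y : Gt), (MulAut.conj g).toMonoidHom y = g * y * g⁻¹ :=
    fun g y => rfl
  have hle : ∀ j : Σ i : I, (↥(R i) × ↥(S i)),
      Subgroup.map (MulAut.conj (ι (((j.2.2 : K))⁻¹ * ((j.2.1 : K))⁻¹))⁻¹).toMonoidHom
        ((Subgroup.closure (Set.range (η j.1))).topologicalClosure) ≤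
      (Subgroup.normalClosure (⋃ i, Set.range (η i))).topologicalClosure := by
    rintro ⟨i, ⟨⟨r, hrm⟩, ⟨s, hsm⟩⟩⟩ g hg
    obtain ⟨y, hy, rfl⟩ := hg
    have key : (MulAut.conj ((ι (s⁻¹ * r⁻¹))⁻¹)).toMonoidHom y ∈
        (Subgroup.normalClosure (⋃ i, Set.range (η i))).topologicalClosure := by
      rw [hconjapply]
      exact hFn.conj_mem y (hFTleF i hy) ((ι (s⁻¹ * r⁻¹))⁻¹)
    exact key
  -- generation of `Gt` by `ι(K)` and the `η`'s
  have hgen_top :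
      (Subgroup.closure (Set.range ⇑ι ∪ ⋃ i, Set.range (η i))).topologicalClosure = ⊤ := by
    apply KurX.eq_top_of_unique_homs (p := p) hGt _ (Subgroup.isClosed_topologicalClosure _)
    intro Q' _ _ hQ' φ₁ φ₂ hφ₁ hφ₂ hagree
    have hsub : ∀ g ∈ Set.range ⇑ι ∪ ⋃ i, Set.range (η i),
        g ∈ (Subgroup.closure (Set.range ⇑ι ∪ ⋃ i, Set.range (η i))).topologicalClosure :=
      fun g hg => Subgroup.le_topologicalClosure _ (Subgroup.subset_closure hg)
    obtain ⟨Φ₀, hΦ₀, hΦ₀u⟩ := hUP Q' hQ' (φ₁.comp ι) (fun e x => φ₁ (η e x))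
      (fun e => @Continuous.comp (X e) Gt Q' (τ e) _ ⊥ _ _ hφ₁ (hηc e))
      (fun e => by show φ₁ (η e (basept e)) = 1; rw [hηb e, map_one])
      (fun e a ha x => Commute.map (hcommι e a ha x) φ₁)
    have h1 : φ₁ = Φ₀ := hΦ₀u φ₁ ⟨hφ₁, fun h => rfl, fun e x => rfl⟩
    have h2 : φ₂ = Φ₀ := by
      refine hΦ₀u φ₂ ⟨hφ₂, fun h => ?_, fun e x => ?_⟩
      · exact (hagree (ι h) (hsub _ (Or.inl ⟨h, rfl⟩))).symm
      · exact (hagree (η e x) (hsub _ (Or.inr (Set.mem_iUnion.2 ⟨e, ⟨x, rfl⟩⟩)))).symm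
    rw [h1, h2]
  -- conjugation stability
  have hAstab : ∀ (i : I) (a : K), a ∈ A i →
      Subgroup.map (MulAut.conj (ι a)).toMonoidHom
        ((Subgroup.closure (Set.range (η i))).topologicalClosure) =
      (Subgroup.closure (Set.range (η i))).topologicalClosure := by
    intro i a ha
    rw [KurX.map_conj_topClosure, MonoidHom.map_closure]
    have hfix : ∀ x, (MulAut.conj (ι a)).toMonoidHom (η i x) = η i x := by
      intro x
      rw [hconjapply, (hcommι i a ha x).eq, mul_inv_cancel_right]
    have himg : ⇑(MulAut.conj (ι a)).toMonoidHom '' Set.range (η i) = Set.range (η i) := by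
      apply Set.Subset.antisymm
      · rintro y ⟨z, ⟨x, rfl⟩, rfl⟩
        rw [hfix x]; exact ⟨x, rfl⟩
      · rintro y ⟨x, rfl⟩
        exact ⟨η i x, ⟨x, rfl⟩, hfix x⟩
    rw [himg]
  have hHfam_eq : ∀ (i : I) (r s : K),
      Subgroup.map (MulAut.conj ((ι (s⁻¹ * r⁻¹))⁻¹)).toMonoidHom
        ((Subgroup.closure (Set.range (η i))).topologicalClosure) =
      Subgroup.map (MulAut.conj (ι (r * s))).toMonoidHom
        ((Subgroup.closure (Set.range (η i))).topologicalClosure) := by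
    intro i r s
    rw [hψ r s]
  -- the closed subgroup generated by the factors
  set NN := (⨆ j : Σ i : I, (↥(R i) × ↥(S i)),
      Subgroup.map (MulAut.conj (ι (((j.2.2 : K))⁻¹ * ((j.2.1 : K))⁻¹))⁻¹).toMonoidHom
        ((Subgroup.closure (Set.range (η j.1))).topologicalClosure)).topologicalClosure
    with hNNdef
  have hCk : ∀ (i : I) (k' : K), Subgroup.map (MulAut.conj (ι k')).toMonoidHom
      ((Subgroup.closure (Set.range (η i))).topologicalClosure) ≤ NN := by
    intro i k'
    have hdecomp : ι k' = ι (rr i k' * ss i k') * ι ((ss i k')⁻¹ * ((rr i k')⁻¹ * k')) := by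
      rw [← map_mul]; congr 1; group
    rw [hdecomp, ← KurX.conj_map_map, hAstab i _ (hss i k').2]
    refine le_trans (le_of_eq (hHfam_eq i (rr i k') (ss i k')).symm) ?_
    refine le_trans ?_ (Subgroup.le_topologicalClosure _)
    exact le_iSup (fun j : Σ i : I, (↥(R i) × ↥(S i)) =>
      Subgroup.map (MulAut.conj (ι (((j.2.2 : K))⁻¹ * ((j.2.1 : K))⁻¹))⁻¹).toMonoidHom
        ((Subgroup.closure (Set.range (η j.1))).topologicalClosure))
      ⟨i, (⟨rr i k', (hrr i k').1⟩, ⟨ss i k', (hss i k').1⟩)⟩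
  have hηNN : ∀ i (x : X i), η i x ∈ NN := by
    intro i x
    have ha0 : (ss i 1)⁻¹ * (rr i 1)⁻¹ ∈ A i := by
      have h1 := (hss i 1).2
      rwa [mul_one] at h1
    have hmem : (MulAut.conj (ι ((ss i 1)⁻¹ * (rr i 1)⁻¹))).toMonoidHom (η i x) ∈ NN := by
      apply hCk i _
      exact Subgroup.mem_map_of_mem _ (hηFT i x)
    have hfix : (MulAut.conj (ι ((ss i 1)⁻¹ * (rr i 1)⁻¹))).toMonoidHom (η i x) = η i x := by
      rw [hconjapply, (hcommι i _ ha0 x).eq, mul_inv_cancel_right]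
    rwa [hfix] at hmem
  have hconj_le : ∀ k : K, Subgroup.map (MulAut.conj (ι k)).toMonoidHom NN ≤ NN := by
    intro k
    rw [hNNdef, KurX.map_conj_topClosure, Subgroup.map_iSup]
    rw [← hNNdef]
    refine Subgroup.topologicalClosure_minimal _ (iSup_le ?_) ?_
    · rintro ⟨i, ⟨⟨r, hrm⟩, ⟨s, hsm⟩⟩⟩
      have e1 : Subgroup.map (MulAut.conj (ι k)).toMonoidHom
          (Subgroup.map (MulAut.conj ((ι (s⁻¹ * r⁻¹))⁻¹)).toMonoidHom
            ((Subgroup.closure (Set.range (η i))).topologicalClosure)) ≤ NN := by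
        rw [hψ r s, KurX.conj_map_map, ← map_mul]
        exact hCk i (k * (r * s))
      exact e1
    · rw [hNNdef]; exact Subgroup.isClosed_topologicalClosure _
  have hNNclosed : IsClosed (NN : Set Gt) := by
    rw [hNNdef]; exact Subgroup.isClosed_topologicalClosure _
  -- NN is normal
  let CS : Subgroup Gt :=
    { carrier := {g : Gt | ∀ n ∈ NN, g * n * g⁻¹ ∈ NN ∧ g⁻¹ * n * g ∈ NN}
      one_mem' := by intro n hn; constructor <;> simpa using hn
      mul_mem' := by
        intro a b ha hb n hn
        constructor
        · have h2 := (ha _ (hb n hn).1).1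
          have e : a * (b * n * b⁻¹) * a⁻¹ = a * b * n * (a * b)⁻¹ := by group
          rwa [e] at h2
        · have h2 := (hb _ (ha n hn).2).2
          have e : b⁻¹ * (a⁻¹ * n * a) * b = (a * b)⁻¹ * n * (a * b) := by group
          rwa [e] at h2
      inv_mem' := by
        intro a ha n hn
        constructor
        · have h2 := (ha n hn).2
          have e : a⁻¹ * n * a = a⁻¹ * n * a⁻¹⁻¹ := by rw [inv_inv]
          rwa [e] at h2
        · have h2 := (ha n hn).1
          have e : a * n * a⁻¹ = a⁻¹⁻¹ * n * a⁻¹ := by rw [inv_inv]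
          rwa [e] at h2 }
  have hCSclosed : IsClosed (CS : Set Gt) := by
    have e : (CS : Set Gt) = ⋂ n : ↥NN,
        ((fun g : Gt => g * ↑n * g⁻¹) ⁻¹' ↑NN) ∩ ((fun g : Gt => g⁻¹ * ↑n * g) ⁻¹' ↑NN) := by
      ext g
      simp only [Set.mem_iInter, Set.mem_inter_iff, Set.mem_preimage, Subtype.forall]
      exact Iff.rfl
    rw [e]
    exact isClosed_iInter fun n => IsClosed.inter
      (hNNclosed.preimage ((continuous_id.mul continuous_const).mul continuous_inv))
      (hNNclosed.preimage ((continuous_inv.mul continuous_const).mul continuous_id))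
  have hCStop : ∀ g : Gt, g ∈ CS := by
    have e : (⊤ : Subgroup Gt) ≤ CS := by
      rw [← hgen_top]
      refine Subgroup.topologicalClosure_minimal _ ((Subgroup.closure_le _).2 ?_) hCSclosed
      rintro g' hg'
      rcases hg' with ⟨k, rfl⟩ | hg'
      · intro n hn
        constructor
        · have h1 : (MulAut.conj (ι k)).toMonoidHom n ∈ NN :=
            hconj_le k (Subgroup.mem_map_of_mem _ hn)
          rwa [hconjapply] at h1
        · have h1 : (MulAut.conj (ι k⁻¹)).toMonoidHom n ∈ NN :=
            hconj_le k⁻¹ (Subgroup.mem_map_of_mem _ hn)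
          rw [hconjapply] at h1
          have e2 : ι k⁻¹ * n * (ι k⁻¹)⁻¹ = (ι k)⁻¹ * n * ι k := by rw [map_inv, inv_inv]
          rwa [e2] at h1
      · obtain ⟨si, hsi⟩ := Set.mem_iUnion.1 hg'
        obtain ⟨x, rfl⟩ := hsi
        have hgNN := hηNN si x
        intro n hn
        exact ⟨mul_mem (mul_mem hgNN hn) (inv_mem hgNN),
          mul_mem (mul_mem (inv_mem hgNN) hn) hgNN⟩
    exact fun g => e (Subgroup.mem_top g)
  haveI hNNnormal : NN.Normal := ⟨fun n hn g => ((hCStop g) n hn).1⟩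
  have hFleNN : (Subgroup.normalClosure (⋃ i, Set.range (η i))).topologicalClosure ≤ NN := by
    refine Subgroup.topologicalClosure_minimal _ (Subgroup.normalClosure_le_normal ?_) hNNclosed
    intro g hg
    obtain ⟨si, hsi⟩ := Set.mem_iUnion.1 hg
    obtain ⟨x, rfl⟩ := hsi
    exact hηNN si x
  have hHfamclosed : ∀ j : Σ i : I, (↥(R i) × ↥(S i)),
      IsClosed ((Subgroup.map (MulAut.conj (ι (((j.2.2 : K))⁻¹ * ((j.2.1 : K))⁻¹))⁻¹).toMonoidHom
        ((Subgroup.closure (Set.range (η j.1))).topologicalClosure) : Set Gt)) := by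
    intro j
    rw [KurX.map_conj_topClosure]
    exact Subgroup.isClosed_topologicalClosure _
  have hFclosed : IsClosed
      ((Subgroup.normalClosure (⋃ i, Set.range (η i))).topologicalClosure : Set Gt) :=
    Subgroup.isClosed_topologicalClosure _
  -- now the universal property
  refine ⟨hle, ?_⟩
  intro Q instGQ instFQ hQp f hfcont
  haveI : Finite ((K → Q) ⋊[KurX.transHom K Q] K) := KurX.finite_sdp _
  haveI : Fintype ((K → Q) ⋊[KurX.transHom K Q] K) := Fintype.ofFinite _
  have hWp : IsPGroup p ((K → Q) ⋊[KurX.transHom K Q] K) :=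
    KurX.isPGroup_sdp hK hQp _
  set cc : ∀ i, X i → K → Q := fun i x k =>
    KurX.valAux ι R S η f i (rr i k⁻¹) (ss i k⁻¹) (hrr i k⁻¹).1 (hss i k⁻¹).1 x with hccdef
  have htrans : ∀ i (x : X i) (a : K), a ∈ A i →
      KurX.transHom K Q a (cc i x) = cc i x := by
    intro i x a ha
    funext k
    rw [KurX.transHom_apply]
    simp only [hccdef]
    have harg : (a⁻¹ * k)⁻¹ = k⁻¹ * a := by rw [mul_inv_rev, inv_inv]
    simp only [harg]
    exact KurX.valAux_congr ι R S η f i _ _ _ _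
      (claim_r i k⁻¹ a ha) (claim_s i k⁻¹ a ha) x
  have hα1 : ∀ i, SemidirectProduct.inl (cc i (basept i)) =
      (1 : (K → Q) ⋊[KurX.transHom K Q] K) := by
    intro i
    have hc1 : cc i (basept i) = 1 := by
      funext k
      simp only [hccdef, KurX.valAux]
      refine Eq.trans (congrArg (⇑(f ⟨i, (⟨rr i k⁻¹, (hrr i k⁻¹).1⟩,
        ⟨ss i k⁻¹, (hss i k⁻¹).1⟩)⟩)) (Subtype.ext ?_)) (map_one _)
      simp [hηb i]
    rw [hc1, map_one]
  have hαc : ∀ i, @Continuous (X i) ((K → Q) ⋊[KurX.transHom K Q] K) (τ i) ⊥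
      (fun x => SemidirectProduct.inl (cc i x)) := by
    intro i
    have hck : ∀ k : K, @Continuous (X i) Q (τ i) ⊥ (fun x => cc i x k) := by
      intro k
      have hm : @Continuous (X i) _ (τ i) _
          (fun x => (⟨(MulAut.conj ((ι ((ss i k⁻¹)⁻¹ * (rr i k⁻¹)⁻¹))⁻¹)).toMonoidHom (η i x),
            Subgroup.mem_map_of_mem _ (hηFT i x)⟩ :
            ↥(Subgroup.map (MulAut.conj ((ι ((ss i k⁻¹)⁻¹ * (rr i k⁻¹)⁻¹))⁻¹)).toMonoidHom
              ((Subgroup.closure (Set.range (η i))).topologicalClosure)))) := by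
        apply Continuous.subtype_mk
        have e : (fun x : X i =>
            (MulAut.conj ((ι ((ss i k⁻¹)⁻¹ * (rr i k⁻¹)⁻¹))⁻¹)).toMonoidHom (η i x)) =
            fun x : X i => (ι ((ss i k⁻¹)⁻¹ * (rr i k⁻¹)⁻¹))⁻¹ * η i x *
              ((ι ((ss i k⁻¹)⁻¹ * (rr i k⁻¹)⁻¹))⁻¹)⁻¹ := by
          funext x
          rw [hconjapply]
        rw [e]
        exact (continuous_const.mul (hηc i)).mul continuous_const
      have e2 : (fun x : X i => cc i x k) =
          (⇑(f ⟨i, (⟨rr i k⁻¹, (hrr i k⁻¹).1⟩, ⟨ss i k⁻¹, (hss i k⁻¹).1⟩)⟩)) ∘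
          (fun x => (⟨(MulAut.conj ((ι ((ss i k⁻¹)⁻¹ * (rr i k⁻¹)⁻¹))⁻¹)).toMonoidHom (η i x),
            Subgroup.mem_map_of_mem _ (hηFT i x)⟩ :
            ↥(Subgroup.map (MulAut.conj ((ι ((ss i k⁻¹)⁻¹ * (rr i k⁻¹)⁻¹))⁻¹)).toMonoidHom
              ((Subgroup.closure (Set.range (η i))).topologicalClosure)))) := rfl
      rw [e2]
      exact @Continuous.comp _ _ _ (τ i) _ ⊥ _ _ (hfcont _) hm
    refine @continuous_def _ _ (τ i) ⊥ _ |>.2 fun s _ => ?_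
    have e : (fun x => SemidirectProduct.inl (cc i x) : X i → _) ⁻¹' s =
        ⋃ (w : ((K → Q) ⋊[KurX.transHom K Q] K)) (_ : w ∈ s),
          (fun x => SemidirectProduct.inl (cc i x)) ⁻¹' {w} := by
      ext x; simp
    rw [e]
    refine isOpen_iUnion fun w => isOpen_iUnion fun hw => ?_
    by_cases hw1 : w.right = 1
    · have hwl : w = SemidirectProduct.inl w.left := by
        conv_lhs => rw [← SemidirectProduct.inl_left_mul_inr_right w]
        rw [hw1, map_one, mul_one]
      have e2 : (fun x => SemidirectProduct.inl (cc i x) : X i → _) ⁻¹' {w} =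
          ⋂ k : K, (fun x => cc i x k) ⁻¹' {w.left k} := by
        ext x
        simp only [Set.mem_preimage, Set.mem_singleton_iff, Set.mem_iInter]
        constructor
        · intro hx k
          rw [hwl, SemidirectProduct.inl_inj] at hx
          rw [hx]
        · intro hk
          rw [hwl, SemidirectProduct.inl_inj]
          funext k
          exact hk k
      rw [e2]
      exact isOpen_iInter_of_finite fun k =>
        @Continuous.isOpen_preimage _ _ (τ i) ⊥ _ (hck k) _ trivial
    · have e2 : (fun x => SemidirectProduct.inl (cc i x) : X i → _) ⁻¹' {w} = ∅ := by
        ext x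
        simp only [Set.mem_preimage, Set.mem_singleton_iff, Set.mem_empty_iff_false, iff_false]
        intro hx
        apply hw1
        rw [← hx]
        rfl
      rw [e2]; exact isOpen_empty
  obtain ⟨Φ, ⟨hΦc, hΦι, hΦη⟩, -⟩ := hUP ((K → Q) ⋊[KurX.transHom K Q] K) hWp
    SemidirectProduct.inr (fun i x => SemidirectProduct.inl (cc i x))
    hαc (fun i => hα1 i)
    (fun e a ha x => KurX.commute_inr_inl a (cc e x) (htrans e x a ha))
  have hΦη' : ∀ (e : I) (x : X e), Φ (η e x) = SemidirectProduct.inl (cc e x) :=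
    fun e x => hΦη e x
  -- the kernel of the right component contains F̃
  have hFker : ∀ g : Gt,
      g ∈ (Subgroup.normalClosure (⋃ i, Set.range (η i))).topologicalClosure →
      (Φ g).right = 1 := by
    have hkerc : IsClosed ((SemidirectProduct.rightHom.comp Φ).ker : Set Gt) := by
      have e : ((SemidirectProduct.rightHom.comp Φ).ker : Set Gt) =
          Φ ⁻¹' {w | SemidirectProduct.rightHom w = 1} := rfl
      rw [e, ← isOpen_compl_iff, ← Set.preimage_compl]
      exact @Continuous.isOpen_preimage _ _ _ ⊥ _ hΦc _ trivial
    have hsub : (Subgroup.normalClosure (⋃ i, Set.range (η i))).topologicalClosure ≤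
        (SemidirectProduct.rightHom.comp Φ).ker := by
      refine Subgroup.topologicalClosure_minimal _
        (Subgroup.normalClosure_le_normal ?_) hkerc
      intro g hg
      obtain ⟨si, hsi⟩ := Set.mem_iUnion.1 hg
      obtain ⟨x, rfl⟩ := hsi
      show η si x ∈ (SemidirectProduct.rightHom.comp Φ).ker
      rw [MonoidHom.mem_ker, MonoidHom.comp_apply, hΦη' si x,
        SemidirectProduct.rightHom_inl]
    intro g hg
    exact hsub hg
  have hmul_left : ∀ a b : ((K → Q) ⋊[KurX.transHom K Q] K), a.right = 1 →
      (a * b).left = a.left * b.left := by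
    intro a b h
    rw [SemidirectProduct.mul_left, h, map_one]
    rfl
  let φQ : ↥((Subgroup.normalClosure (⋃ i, Set.range (η i))).topologicalClosure) →* Q :=
    { toFun := fun g => (Φ ↑g).left 1
      map_one' := by
        show (Φ ((1 : ↥((Subgroup.normalClosure (⋃ i, Set.range (η i))).topologicalClosure)) :
          Gt)).left 1 = 1
        rw [OneMemClass.coe_one, map_one]
        rfl
      map_mul' := by
        intro a b
        show (Φ ((↑(a * b) : Gt))).left 1 = (Φ ↑a).left 1 * (Φ ↑b).left 1
        rw [Subgroup.coe_mul, map_mul, hmul_left _ _ (hFker ↑a a.2)]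
        rfl }
  have hφQc : @Continuous _ Q _ ⊥ ⇑φQ := by
    have h1 : @Continuous _ _ _ ⊥ (fun g : ↥((Subgroup.normalClosure
        (⋃ i, Set.range (η i))).topologicalClosure) => Φ ↑g) :=
      @Continuous.comp _ _ _ _ _ ⊥ _ _ hΦc continuous_subtype_val
    have h2 : @Continuous _ Q _ ⊥ (fun g : ↥((Subgroup.normalClosure
        (⋃ i, Set.range (η i))).topologicalClosure) => (Φ ↑g).left 1) :=
      @Continuous.comp _ _ _ _ ⊥ ⊥ _
        (fun w : ((K → Q) ⋊[KurX.transHom K Q] K) => w.left 1) continuous_bot h1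
    exact h2
  -- value on generators
  have hgen : ∀ (i : I) (r s : K) (hrm : r ∈ R i) (hsm : s ∈ S i) (x : X i)
      (hmem : (MulAut.conj ((ι (s⁻¹ * r⁻¹))⁻¹)).toMonoidHom (η i x) ∈
        (Subgroup.normalClosure (⋃ i, Set.range (η i))).topologicalClosure),
      φQ ⟨(MulAut.conj ((ι (s⁻¹ * r⁻¹))⁻¹)).toMonoidHom (η i x), hmem⟩ =
      KurX.valAux ι R S η f i r s hrm hsm x := by
    intro i r s hrm hsm x hmem
    have hη2 : (MulAut.conj ((ι (s⁻¹ * r⁻¹))⁻¹)).toMonoidHom (η i x) =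
        (ι (s⁻¹ * r⁻¹))⁻¹ * η i x * ι (s⁻¹ * r⁻¹) := by
      rw [hconjapply, inv_inv]
    show (Φ ((MulAut.conj ((ι (s⁻¹ * r⁻¹))⁻¹)).toMonoidHom (η i x))).left 1 = _
    rw [hη2, map_mul, map_mul, map_inv, hΦι, hΦη']
    have e3 : (SemidirectProduct.inr (s⁻¹ * r⁻¹) :
        (K → Q) ⋊[KurX.transHom K Q] K)⁻¹ * SemidirectProduct.inl (cc i x) *
        SemidirectProduct.inr (s⁻¹ * r⁻¹) =
        SemidirectProduct.inl ((KurX.transHom K Q (s⁻¹ * r⁻¹))⁻¹ (cc i x)) := by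
      rw [← map_inv SemidirectProduct.inr]
      exact (SemidirectProduct.inl_aut_inv _ _).symm
    rw [e3, SemidirectProduct.left_inl]
    have e4 : ((KurX.transHom K Q (s⁻¹ * r⁻¹))⁻¹ (cc i x)) 1 = cc i x (s⁻¹ * r⁻¹) := by
      rw [← map_inv (KurX.transHom K Q), KurX.transHom_apply, inv_inv, mul_one]
    rw [e4]
    simp only [hccdef]
    have harg : (s⁻¹ * r⁻¹)⁻¹ = r * s := by rw [mul_inv_rev, inv_inv, inv_inv]
    simp only [harg]
    exact KurX.valAux_congr ι R S η f i _ _ hrm hsm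
      (claim_rs_r i r s hrm hsm) (claim_rs_s i r s hrm hsm) x
  -- the homomorphism agrees with the given maps on each factor
  have hag : ∀ (j : Σ i : I, (↥(R i) × ↥(S i))) (g : Gt)
      (hg : g ∈ Subgroup.map (MulAut.conj
          (ι (((j.2.2 : K))⁻¹ * ((j.2.1 : K))⁻¹))⁻¹).toMonoidHom
        ((Subgroup.closure (Set.range (η j.1))).topologicalClosure)),
      φQ ⟨g, hle j hg⟩ = f j ⟨g, hg⟩ := by
    intro j
    haveI : CompactSpace ↥(Subgroup.map (MulAut.conj
        (ι (((j.2.2 : K))⁻¹ * ((j.2.1 : K))⁻¹))⁻¹).toMonoidHom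
        ((Subgroup.closure (Set.range (η j.1))).topologicalClosure)) :=
      isCompact_iff_compactSpace.1 ((hHfamclosed j).isCompact)
    have hincl : Continuous (⇑(Subgroup.inclusion (hle j)) :
        ↥(Subgroup.map (MulAut.conj
          (ι (((j.2.2 : K))⁻¹ * ((j.2.1 : K))⁻¹))⁻¹).toMonoidHom
          ((Subgroup.closure (Set.range (η j.1))).topologicalClosure)) →
        ↥((Subgroup.normalClosure (⋃ i, Set.range (η i))).topologicalClosure)) :=
      Continuous.subtype_mk continuous_subtype_val _
    have hψ₁c : @Continuous _ Q _ ⊥ (⇑φQ ∘ ⇑(Subgroup.inclusion (hle j))) :=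
      @Continuous.comp _ _ _ _ _ ⊥ _ _ hφQc hincl
    have hEclosed : IsClosed
        (SetLike.coe ((φQ.comp (Subgroup.inclusion (hle j))).eqLocus (f j) : Subgroup _)) :=
      KurX.isClosed_eqSet _ _ hψ₁c (hfcont _)
    have hTclosed : IsClosed
        ((Subgroup.map (Subgroup.map (MulAut.conj
            (ι (((j.2.2 : K))⁻¹ * ((j.2.1 : K))⁻¹))⁻¹).toMonoidHom
            ((Subgroup.closure (Set.range (η j.1))).topologicalClosure)).subtype
          ((φQ.comp (Subgroup.inclusion (hle j))).eqLocus (f j)) : Subgroup Gt) : Set Gt) := by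
      rw [Subgroup.coe_map, Subgroup.coe_subtype]
      exact (hEclosed.isCompact.image continuous_subtype_val).isClosed
    have hHfamT : Subgroup.map (MulAut.conj
        (ι (((j.2.2 : K))⁻¹ * ((j.2.1 : K))⁻¹))⁻¹).toMonoidHom
        ((Subgroup.closure (Set.range (η j.1))).topologicalClosure) ≤
        Subgroup.map (Subgroup.map (MulAut.conj
            (ι (((j.2.2 : K))⁻¹ * ((j.2.1 : K))⁻¹))⁻¹).toMonoidHom
            ((Subgroup.closure (Set.range (η j.1))).topologicalClosure)).subtype
          ((φQ.comp (Subgroup.inclusion (hle j))).eqLocus (f j)) := by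
      have e5 : Subgroup.map (MulAut.conj
          (ι (((j.2.2 : K))⁻¹ * ((j.2.1 : K))⁻¹))⁻¹).toMonoidHom
          ((Subgroup.closure (Set.range (η j.1))).topologicalClosure) =
          (Subgroup.map (MulAut.conj
            (ι (((j.2.2 : K))⁻¹ * ((j.2.1 : K))⁻¹))⁻¹).toMonoidHom
            (Subgroup.closure (Set.range (η j.1)))).topologicalClosure :=
        KurX.map_conj_topClosure _ _
      refine le_trans (le_of_eq (e5.trans (by rw [MonoidHom.map_closure]))) ?_
      refine Subgroup.topologicalClosure_minimal _ ((Subgroup.closure_le _).2 ?_) hTclosed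
      rintro y ⟨g0, ⟨x, rfl⟩, rfl⟩
      have hmemHJ : (MulAut.conj
          (ι (((j.2.2 : K))⁻¹ * ((j.2.1 : K))⁻¹))⁻¹).toMonoidHom (η j.1 x) ∈
          Subgroup.map (MulAut.conj
            (ι (((j.2.2 : K))⁻¹ * ((j.2.1 : K))⁻¹))⁻¹).toMonoidHom
            ((Subgroup.closure (Set.range (η j.1))).topologicalClosure) :=
        Subgroup.mem_map_of_mem _ (hηFT j.1 x)
      refine ⟨⟨_, hmemHJ⟩, ?_, rfl⟩
      show (φQ.comp (Subgroup.inclusion (hle j))) _ = f j _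
      exact hgen j.1 (j.2.1 : K) (j.2.2 : K) (j.2.1).2 (j.2.2).2 x _
    intro g hg
    obtain ⟨e0, he0, heq⟩ := hHfamT hg
    have he : e0 = ⟨g, hg⟩ := Subtype.ext heq
    rw [he] at he0
    exact he0
  refine ⟨φQ, ⟨hφQc, hag⟩, ?_⟩
  intro φ' hφ'
  obtain ⟨hφ'c, hφ'ag⟩ := hφ'
  haveI : CompactSpace
      ↥((Subgroup.normalClosure (⋃ i, Set.range (η i))).topologicalClosure) :=
    isCompact_iff_compactSpace.1 (hFclosed.isCompact)
  set E' := φ'.eqLocus φQ with hE'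
  have hE'closed : IsClosed (SetLike.coe E') := KurX.isClosed_eqSet _ _ hφ'c hφQc
  have hT'closed : IsClosed
      ((E'.map ((Subgroup.normalClosure (⋃ i, Set.range (η i))).topologicalClosure).subtype :
        Subgroup Gt) : Set Gt) := by
    rw [Subgroup.coe_map, Subgroup.coe_subtype]
    exact (hE'closed.isCompact.image continuous_subtype_val).isClosed
  have hHfamT' : ∀ j : Σ i : I, (↥(R i) × ↥(S i)),
      Subgroup.map (MulAut.conj (ι (((j.2.2 : K))⁻¹ * ((j.2.1 : K))⁻¹))⁻¹).toMonoidHom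
        ((Subgroup.closure (Set.range (η j.1))).topologicalClosure) ≤
      E'.map ((Subgroup.normalClosure (⋃ i, Set.range (η i))).topologicalClosure).subtype := by
    intro j g hg
    refine ⟨⟨g, hle j hg⟩, ?_, rfl⟩
    show φ' _ = φQ _
    rw [hφ'ag j g hg, hag j g hg]
  have hNNT' : NN ≤
      E'.map ((Subgroup.normalClosure (⋃ i, Set.range (η i))).topologicalClosure).subtype := by
    rw [hNNdef]
    exact Subgroup.topologicalClosure_minimal _ (iSup_le hHfamT') hT'closed
  have hFT' : ∀ g : Gt,
      g ∈ (Subgroup.normalClosure (⋃ i, Set.range (η i))).topologicalClosure →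
      g ∈ E'.map ((Subgroup.normalClosure (⋃ i, Set.range (η i))).topologicalClosure).subtype :=
    fun g hg => hNNT' (hFleNN hg)
  ext g
  obtain ⟨e0, he0, heq⟩ := hFT' ↑g g.2
  have he : e0 = g := Subtype.ext heq
  rw [he] at he0
  exact he0
end
end
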